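/- arXiv:1012.2751 — 2 statements merged into one kernel-verified Lean document; each statement's English description precedes it below -/
import Mathlib

section
/- Let blocks of a random sequence be generated as follows: at block i (of k symbols over alphabet X), a prefix of k-d symbols is drawn uniformly and independently of the past; if this prefix equals a previously drawn prefix, the suffix is copied from that earlier block, otherwise the suffix of d symbols is drawn uniformly. Then the conditional entropy of the i-th block given all previous blocks satisfies H(Z_i | Z^{i-1}) ≥ d·log|X|·(1 - (i-1)/|X|^{k-d}) + (k-d)·log|X|. -/
/-!
On the uniform sample space, `H(f | g)` is the average over outcomes `ω` of
`log (#{g = g ω} / #{(f, g) = (f ω, g ω)})`. The outcomes whose first `N` blocks agree with those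
of `ω` are exactly those with the same first `N` prefixes and the same fresh suffixes at the first
occurrences of these prefixes, so they form a product cylinder. Passing from `i - 1` to `i` blocks
pins one more prefix and, when the last prefix is new, one more suffix: the log-ratio is
`(k - d) log |X|`, plus `d log |X|` on that event. A union bound over the `i - 1` earlier blocks
shows that the last prefix is new with probability at least `1 - (i - 1) / |X| ^ (k - d)`.
-/

open Finset

/-- Shannon entropy (base 2) of a probability mass function on a finite type. -/
noncomputable def ent {α : Type*} [Fintype α] (p : α → ℝ) : ℝ :=
  -∑ a, p a * Real.logb 2 (p a)

/-- Distribution of a random variable `f` on the uniform finite probability space `Ω`. -/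
noncomputable def dist {Ω α : Type*} [Fintype Ω] [Fintype α] [DecidableEq α]
    (f : Ω → α) : α → ℝ :=
  fun a => ((Finset.univ.filter fun ω => f ω = a).card : ℝ) / (Fintype.card Ω : ℝ)

/-- Entropy of a random variable on the uniform finite probability space. -/
noncomputable def entRV {Ω α : Type*} [Fintype Ω] [Fintype α] [DecidableEq α]
    (f : Ω → α) : ℝ :=
  ent (dist f)

/-- Conditional entropy H(f | g) = H(f, g) - H(g), on the uniform finite space `Ω`. -/
noncomputable def condEnt {Ω α β : Type*} [Fintype Ω] [Fintype α] [Fintype β]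
    [DecidableEq α] [DecidableEq β] (f : Ω → α) (g : Ω → β) : ℝ :=
  entRV (fun ω => (f ω, g ω)) - entRV g

/-- Sample space of the block-generation process: independent uniform prefixes of
length k-d and independent uniform "fresh" suffixes of length d, one per block. -/
abbrev BlockSpace (X : Type*) (k d i : ℕ) :=
  (Fin i → (Fin (k - d) → X)) × (Fin i → (Fin d → X))

/-- The j-th generated block: its prefix is the drawn prefix, and its suffix is the fresh
suffix of the earliest block having the same prefix (so a repeated prefix copies the suffix
of the earlier block, and a new prefix gets a fresh uniform suffix). -/
def blockFn {X : Type*} [DecidableEq X] (k d i : ℕ)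
    (ω : BlockSpace X k d i) (j : Fin i) : Fin k → X :=
  fun t =>
    if h : t.val < k - d then ω.1 j ⟨t.val, h⟩
    else ω.2 ((Finset.univ.filter fun j' : Fin i => ω.1 j' = ω.1 j).min'
        ⟨j, by simp⟩) ⟨t.val - (k - d), by omega⟩

lemma neg_sum_div_mul_logb_div {ι : Type*} (s : Finset ι) (c : ι → ℝ) {b n : ℝ}
    (hn : n ≠ 0) (hsum : ∑ a ∈ s, c a = n) :
    -∑ a ∈ s, c a / n * Real.logb b (c a / n) =
      Real.logb b n - n⁻¹ * ∑ a ∈ s, c a * Real.logb b (c a) := by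
  have hterm : ∀ a, c a / n * Real.logb b (c a / n) =
      n⁻¹ * (c a * Real.logb b (c a)) - c a / n * Real.logb b n := by
    intro a
    rcases eq_or_ne (c a) 0 with h | h
    · simp [h]
    · rw [Real.logb_div h hn]
      ring
  simp only [hterm, sum_sub_distrib, ← mul_sum, ← sum_mul, ← sum_div, hsum, div_self hn]
  ring

section FiberEntropy

variable {Ω α β : Type*} [Fintype Ω] [DecidableEq α]

def fiberCard (f : Ω → α) (ω : Ω) : ℕ := #{ω' | f ω' = f ω}

lemma sum_logb_fiberCard [Fintype α] (f : Ω → α) :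
    ∑ ω, Real.logb 2 (fiberCard f ω) =
      ∑ a, (#{ω | f ω = a} : ℝ) * Real.logb 2 #{ω | f ω = a} := by
  rw [← sum_fiberwise univ f]
  refine sum_congr rfl fun a _ => ?_
  rw [sum_congr rfl fun ω hω => by rw [fiberCard, (mem_filter.1 hω).2], sum_const, nsmul_eq_mul]

lemma entRV_eq_logb_card_sub [Fintype α] (f : Ω → α) :
    entRV f = Real.logb 2 (Fintype.card Ω)
      - (Fintype.card Ω : ℝ)⁻¹ * ∑ ω, Real.logb 2 (fiberCard f ω) := by
  rcases isEmpty_or_nonempty Ω with hΩ | hΩ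
  · simp [entRV, ent, _root_.dist]
  have hsum : ∑ a, (#{ω | f ω = a} : ℝ) = Fintype.card Ω := by
    exact_mod_cast (card_eq_sum_card_fiberwise fun ω _ => mem_univ (f ω)).symm
  rw [sum_logb_fiberCard, ← neg_sum_div_mul_logb_div univ _ (by positivity) hsum]
  rfl

lemma condEnt_eq_avg_logb_sub [Fintype α] [Fintype β] [DecidableEq β] (f : Ω → α)
    (g : Ω → β) :
    condEnt f g = (Fintype.card Ω : ℝ)⁻¹ *
      ∑ ω, (Real.logb 2 (fiberCard g ω) -
        Real.logb 2 (fiberCard (fun ω => (f ω, g ω)) ω)) := by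
  rw [condEnt, entRV_eq_logb_card_sub, entRV_eq_logb_card_sub, sum_sub_distrib]
  ring

lemma fiberCard_congr [DecidableEq β] {f : Ω → α} {g : Ω → β}
    (h : ∀ ω ω', f ω' = f ω ↔ g ω' = g ω) : fiberCard f = fiberCard g := by
  ext ω
  simp only [fiberCard, h]

end FiberEntropy

section Counting

variable {ι γ : Type*} [Fintype ι] [DecidableEq ι] [Fintype γ] [DecidableEq γ]

lemma card_filter_forall_mem_eq (A : Finset ι) (S : ι → γ) :
    #{v : ι → γ | ∀ m ∈ A, v m = S m} = Fintype.card γ ^ (Fintype.card ι - #A) := by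
  have hpi : ({v : ι → γ | ∀ m ∈ A, v m = S m} : Finset _) =
      Fintype.piFinset fun m => if m ∈ A then {S m} else univ := by
    ext v
    simp only [mem_filter, mem_univ, true_and, Fintype.mem_piFinset]
    refine forall_congr' fun m => ?_
    split_ifs with hm <;> simp [hm]
  rw [hpi, Fintype.card_piFinset]
  simp [apply_ite, prod_ite, filter_not, card_univ_sdiff]

lemma card_filter_apply_eq_apply_mul_card {j j' : ι} (h : j ≠ j') :
    #{v : ι → γ | v j = v j'} * Fintype.card γ = Fintype.card γ ^ Fintype.card ι := by
  let e : {v : ι → γ // v j = v j'} × γ ≃ (ι → γ) :=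
    { toFun := fun vc => Function.update vc.1.1 j' vc.2
      invFun := fun w => (⟨Function.update w j' (w j), by simp [h]⟩, w j')
      left_inv := fun ⟨⟨v, hv⟩, c⟩ => by
        ext1
        · ext1; simp [h, hv]
        · simp
      right_inv := fun w => by simp }
  rw [← Fintype.card_fun, ← Fintype.card_congr e, Fintype.card_prod, Fintype.card_subtype]

lemma card_biUnion_filter_apply_eq_mul_card_le (T : Finset ι) {m : ι} (hm : m ∉ T) :
    #(T.biUnion fun j => {v : ι → γ | v j = v m}) * Fintype.card γ ≤
      #T * Fintype.card γ ^ Fintype.card ι :=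
  calc #(T.biUnion fun j => {v : ι → γ | v j = v m}) * Fintype.card γ
      ≤ (∑ j ∈ T, #{v : ι → γ | v j = v m}) * Fintype.card γ :=
        Nat.mul_le_mul_right _ card_biUnion_le
    _ = #T * Fintype.card γ ^ Fintype.card ι := by
        rw [sum_mul, sum_congr rfl fun j hj =>
          card_filter_apply_eq_apply_mul_card (ne_of_mem_of_not_mem hj hm), sum_const, smul_eq_mul]

end Counting

section FirstIndex

variable {α : Type*} [DecidableEq α] {n : ℕ} (p : Fin n → α)

def firstIndex (j : Fin n) : Fin n := ({j' | p j' = p j} : Finset (Fin n)).min' ⟨j, by simp⟩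

def firstOccurrences (N : ℕ) : Finset (Fin n) := image (firstIndex p) {j | j.val < N}

variable {p}

lemma firstIndex_le_of_apply_eq {j j' : Fin n} (h : p j' = p j) : firstIndex p j ≤ j' :=
  min'_le _ _ (by simpa using h)

lemma firstIndex_le (j : Fin n) : firstIndex p j ≤ j := firstIndex_le_of_apply_eq rfl

lemma apply_firstIndex (j : Fin n) : p (firstIndex p j) = p j :=
  (mem_filter.1 (min'_mem ({j' | p j' = p j} : Finset (Fin n)) _)).2

lemma firstIndex_eq_of_apply_eq {j j' : Fin n} (h : p j = p j') :
    firstIndex p j = firstIndex p j' :=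
  le_antisymm (firstIndex_le_of_apply_eq (by rw [apply_firstIndex (p := p), h]))
    (firstIndex_le_of_apply_eq (by rw [apply_firstIndex (p := p), h]))

lemma firstIndex_congr {q : Fin n → α} {N : ℕ} (hpq : ∀ m : Fin n, m.val < N → q m = p m)
    {j : Fin n} (hj : j.val < N) : firstIndex q j = firstIndex p j := by
  have hp : (firstIndex p j).val < N := (Fin.le_def.1 (firstIndex_le j)).trans_lt hj
  have hq : (firstIndex q j).val < N := (Fin.le_def.1 (firstIndex_le j)).trans_lt hj
  exact le_antisymm
    (firstIndex_le_of_apply_eq (by rw [hpq _ hp, hpq _ hj, apply_firstIndex (p := p)]))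
    (firstIndex_le_of_apply_eq (by rw [← hpq _ hq, ← hpq _ hj, apply_firstIndex (p := q)]))

lemma firstIndex_eq_self {j : Fin n} (hj : ∀ j' < j, p j' ≠ p j) : firstIndex p j = j :=
  (firstIndex_le j).eq_or_lt.resolve_right fun hlt => hj _ hlt (apply_firstIndex j)

lemma card_firstOccurrences_succ (m : Fin n) [Decidable (∀ j < m, p j ≠ p m)] :
    #(firstOccurrences p (m + 1)) =
      #(firstOccurrences p m) + if ∀ j < m, p j ≠ p m then 1 else 0 := by
  have hinsert : firstOccurrences p (m + 1) = insert (firstIndex p m) (firstOccurrences p m) := by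
    rw [firstOccurrences, firstOccurrences, ← image_insert]
    congr 1
    ext j
    simp [le_iff_eq_or_lt, Fin.val_inj]
  rw [hinsert]
  split_ifs with hfresh
  · refine card_insert_of_notMem fun hmem => ?_
    obtain ⟨j, hj, hjm⟩ := mem_image.1 hmem
    have hlt : firstIndex p j < m := (firstIndex_le j).trans_lt (Fin.lt_def.2 (by simpa using hj))
    rw [hjm, firstIndex_eq_self hfresh] at hlt
    exact lt_irrefl _ hlt
  · push Not at hfresh
    obtain ⟨j, hj, hjm⟩ := hfresh
    have hmem : firstIndex p m ∈ firstOccurrences p m :=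
      mem_image.2 ⟨j, by simpa using hj, firstIndex_eq_of_apply_eq hjm⟩
    rw [insert_eq_of_mem hmem, add_zero]

end FirstIndex

section Blocks

variable {X : Type*} [DecidableEq X] {k d i : ℕ}

lemma blockFn_apply (ω : BlockSpace X k d i) (j : Fin i) (t : Fin k) :
    blockFn k d i ω j t = if h : t.val < k - d then ω.1 j ⟨t.val, h⟩
      else ω.2 (firstIndex ω.1 j) ⟨t.val - (k - d), by omega⟩ := rfl

lemma blockFn_eq_blockFn_iff (hdk : d ≤ k) (ω ω' : BlockSpace X k d i) (j : Fin i) :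
    blockFn k d i ω' j = blockFn k d i ω j ↔
      ω'.1 j = ω.1 j ∧ ω'.2 (firstIndex ω'.1 j) = ω.2 (firstIndex ω.1 j) := by
  constructor
  · intro h
    refine ⟨funext fun t => ?_, funext fun t => ?_⟩
    · simpa [blockFn_apply] using congrFun h ⟨t, by omega⟩
    · simpa [blockFn_apply] using congrFun h ⟨k - d + t, by omega⟩
  · rintro ⟨hpre, hsuf⟩
    funext t
    simp only [blockFn_apply, hpre, hsuf]

def history {N : ℕ} (hN : N ≤ i) (ω : BlockSpace X k d i) : Fin N → Fin k → X :=
  fun j => blockFn k d i ω (Fin.castLE hN j)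

lemma history_eq_history_iff {N : ℕ} (hN : N ≤ i) (ω ω' : BlockSpace X k d i) :
    history hN ω' = history hN ω ↔
      ∀ j : Fin i, j.val < N → blockFn k d i ω' j = blockFn k d i ω j :=
  funext_iff.trans ⟨fun h j hj => h ⟨j, hj⟩, fun h j => h _ j.isLt⟩

lemma history_eq_history_iff_prefix_and_suffix (hdk : d ≤ k) {N : ℕ} (hN : N ≤ i)
    (ω ω' : BlockSpace X k d i) :
    history hN ω' = history hN ω ↔
      (∀ m ∈ ({j | j.val < N} : Finset (Fin i)), ω'.1 m = ω.1 m) ∧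
        ∀ m ∈ firstOccurrences ω.1 N, ω'.2 m = ω.2 m := by
  simp only [history_eq_history_iff, blockFn_eq_blockFn_iff hdk, mem_filter, mem_univ, true_and]
  constructor
  · intro h
    have hpre : ∀ j : Fin i, j.val < N → ω'.1 j = ω.1 j := fun j hj => (h j hj).1
    refine ⟨hpre, fun m hm => ?_⟩
    obtain ⟨j, hj, rfl⟩ := mem_image.1 hm
    have hj : j.val < N := by simpa using hj
    simpa [firstIndex_congr hpre hj] using (h j hj).2
  · rintro ⟨hpre, hsuf⟩ j hj
    rw [firstIndex_congr hpre hj]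
    exact ⟨hpre j hj, hsuf _ (mem_image_of_mem _ (by simpa using hj))⟩

lemma fiberCard_history [Fintype X] (hdk : d ≤ k) {N : ℕ} (hN : N ≤ i)
    (ω : BlockSpace X k d i) :
    fiberCard (history hN) ω = Fintype.card (Fin (k - d) → X) ^ (i - N) *
      Fintype.card (Fin d → X) ^ (i - #(firstOccurrences ω.1 N)) := by
  simp only [fiberCard, history_eq_history_iff_prefix_and_suffix hdk]
  rw [← univ_product_univ,
    filter_product (fun v : Fin i → Fin (k - d) → X =>
        ∀ m ∈ ({j | j.val < N} : Finset (Fin i)), v m = ω.1 m)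
      (fun v : Fin i → Fin d → X => ∀ m ∈ firstOccurrences ω.1 N, v m = ω.2 m),
    card_product]
  congr 1
  · have h := card_filter_forall_mem_eq ({j | j.val < N} : Finset (Fin i)) ω.1
    rw [Fintype.card_fin, Fin.card_filter_val_lt, min_eq_right hN] at h
    convert h
  · have h := card_filter_forall_mem_eq (firstOccurrences ω.1 N) ω.2
    rw [Fintype.card_fin] at h
    convert h

end Blocks

section LastBlock

variable {X : Type*} [Fintype X] [DecidableEq X] {k d i : ℕ}

def lastIndex (hi : 1 ≤ i) : Fin i := ⟨i - 1, by omega⟩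

variable (X k d) in
def freshEvent (hi : 1 ≤ i) : Finset (BlockSpace X k d i) :=
  {ω | ∀ j < lastIndex hi, ω.1 j ≠ ω.1 (lastIndex hi)}

lemma card_compl_freshEvent_mul_le (hi : 1 ≤ i) :
    #(freshEvent X k d hi)ᶜ * Fintype.card (Fin (k - d) → X)
      ≤ (i - 1) * Fintype.card (BlockSpace X k d i) := by
  have hunion := card_biUnion_filter_apply_eq_mul_card_le (γ := Fin (k - d) → X)
    (Iio (lastIndex hi)) (m := lastIndex hi) (by simp)
  rw [Fin.card_Iio, Fintype.card_fin, show (lastIndex hi : ℕ) = i - 1 from rfl] at hunion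
  have hsub : (freshEvent X k d hi)ᶜ ⊆
      ((Iio (lastIndex hi)).biUnion fun j => {v | v j = v (lastIndex hi)}) ×ˢ univ := by
    intro ω hω
    simpa [freshEvent] using hω
  calc _ ≤ #(((Iio (lastIndex hi)).biUnion
          fun j => {v : Fin i → Fin (k - d) → X | v j = v (lastIndex hi)}) ×ˢ
          (univ : Finset (Fin i → Fin d → X))) * Fintype.card (Fin (k - d) → X) :=
        Nat.mul_le_mul_right _ (card_le_card hsub)
    _ ≤ (i - 1) * Fintype.card (Fin (k - d) → X) ^ i *
          Fintype.card (Fin i → Fin d → X) := by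
        rw [card_product, card_univ, mul_right_comm]
        exact Nat.mul_le_mul_right _ hunion
    _ = _ := by
        rw [Fintype.card_prod, Fintype.card_fun (α := Fin i) (β := Fin (k - d) → X),
          Fintype.card_fin]
        ring

lemma fiberCard_lastBlock_history (hi : 1 ≤ i) :
    fiberCard (fun ω : BlockSpace X k d i =>
        (blockFn k d i ω (lastIndex hi), history (Nat.sub_le i 1) ω)) =
      fiberCard (history le_rfl) := by
  refine fiberCard_congr fun ω ω' => ?_
  simp only [Prod.ext_iff, history_eq_history_iff]
  constructor
  · rintro ⟨hlast, hprev⟩ j hj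
    rcases Nat.lt_or_ge j.val (i - 1) with h | h
    · exact hprev j h
    · rwa [show j = lastIndex hi from Fin.ext (by simp only [lastIndex]; omega)]
  · intro h
    exact ⟨h _ (lastIndex hi).isLt, fun j hj => h j (by omega)⟩

lemma fiberCard_history_pred_eq (hdk : d ≤ k) (hi : 1 ≤ i) (ω : BlockSpace X k d i) :
    fiberCard (history (Nat.sub_le i 1)) ω =
      Fintype.card (Fin (k - d) → X) *
        Fintype.card (Fin d → X) ^ (if ω ∈ freshEvent X k d hi then 1 else 0) *
          fiberCard (history le_rfl) ω := by
  have hstep := card_firstOccurrences_succ (p := ω.1) (lastIndex hi)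
  rw [show (lastIndex hi : ℕ) = i - 1 from rfl, Nat.sub_add_cancel hi] at hstep
  have hle : #(firstOccurrences ω.1 i) ≤ i := (card_le_univ _).trans_eq (Fintype.card_fin i)
  have hfresh : ω ∈ freshEvent X k d hi ↔
      ∀ j < lastIndex hi, ω.1 j ≠ ω.1 (lastIndex hi) := by
    simp [freshEvent]
  rw [fiberCard_history hdk, fiberCard_history hdk, Nat.sub_sub_self hi, Nat.sub_self,
    pow_one, pow_zero, one_mul, mul_assoc, ← pow_add]
  congr 2
  by_cases hω : ω ∈ freshEvent X k d hi
  · rw [if_pos (hfresh.1 hω)] at hstep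
    rw [if_pos hω]
    omega
  · rw [if_neg (mt hfresh.2 hω)] at hstep
    rw [if_neg hω]
    omega

end LastBlock

section Entropy

variable {X : Type*} [Fintype X] [DecidableEq X] [Nonempty X] {k d i : ℕ}

lemma condEnt_lastBlock_history (hdk : d ≤ k) (hi : 1 ≤ i) :
    condEnt (fun ω : BlockSpace X k d i => blockFn k d i ω (lastIndex hi))
        (history (Nat.sub_le i 1)) =
      Real.logb 2 (Fintype.card (Fin (k - d) → X)) +
        #(freshEvent X k d hi) / Fintype.card (BlockSpace X k d i) *
          Real.logb 2 (Fintype.card (Fin d → X)) := by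
  have hpoint : ∀ ω : BlockSpace X k d i,
      Real.logb 2 (fiberCard (history (Nat.sub_le i 1)) ω) -
          Real.logb 2 (fiberCard (history le_rfl) ω) =
        Real.logb 2 (Fintype.card (Fin (k - d) → X)) +
          if ω ∈ freshEvent X k d hi then Real.logb 2 (Fintype.card (Fin d → X)) else 0 := by
    intro ω
    have hfib : (0 : ℝ) < fiberCard (history (X := X) (k := k) (d := d) le_rfl) ω := by
      exact_mod_cast card_pos.2 ⟨ω, by simp⟩
    rw [fiberCard_history_pred_eq hdk hi ω]
    push_cast
    rw [Real.logb_mul (by positivity) hfib.ne', Real.logb_mul (by positivity) (by positivity),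
      Real.logb_pow]
    split_ifs <;> simp
  rw [condEnt_eq_avg_logb_sub, fiberCard_lastBlock_history, sum_congr rfl fun ω _ => hpoint ω,
    sum_add_distrib, sum_const, card_univ, sum_ite_mem, univ_inter, sum_const, nsmul_eq_mul,
    nsmul_eq_mul]
  field_simp

lemma one_sub_div_le_card_freshEvent_div (hi : 1 ≤ i) :
    1 - ((i : ℝ) - 1) / Fintype.card (Fin (k - d) → X) ≤
      #(freshEvent X k d hi) / Fintype.card (BlockSpace X k d i) := by
  have hΩ : (0 : ℝ) < Fintype.card (BlockSpace X k d i) := by exact_mod_cast Fintype.card_pos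
  have hNp : (0 : ℝ) < Fintype.card (Fin (k - d) → X) := by exact_mod_cast Fintype.card_pos
  have hcompl : ((Fintype.card (BlockSpace X k d i) : ℝ) - #(freshEvent X k d hi)) *
      Fintype.card (Fin (k - d) → X) ≤ ((i : ℝ) - 1) * Fintype.card (BlockSpace X k d i) := by
    have h := card_compl_freshEvent_mul_le (X := X) (k := k) (d := d) hi
    rw [card_compl, ← Nat.cast_le (α := ℝ)] at h
    push_cast [card_le_univ, hi] at h
    exact h
  have hratio : ((Fintype.card (BlockSpace X k d i) : ℝ) - #(freshEvent X k d hi)) /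
      Fintype.card (BlockSpace X k d i) ≤ ((i : ℝ) - 1) / Fintype.card (Fin (k - d) → X) := by
    rw [div_le_div_iff₀ hΩ hNp]
    linarith
  rw [sub_div, div_self hΩ.ne'] at hratio
  linarith

end Entropy

/-- Under the block-generation process, the conditional entropy of the i-th (last) block
given all previous blocks is at least d·log|X|·(1-(i-1)/|X|^{k-d}) + (k-d)·log|X|. -/
theorem stmt8 {X : Type*} [Fintype X] [DecidableEq X] (hX : 2 ≤ Fintype.card X)
    (k d i : ℕ) (hdk : d ≤ k) (hi : 1 ≤ i) :
    condEnt (fun ω : BlockSpace X k d i => blockFn k d i ω ⟨i - 1, by omega⟩)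
        (fun ω : BlockSpace X k d i => fun j : Fin (i - 1) =>
          blockFn k d i ω ⟨j.val, by omega⟩)
      ≥ (d : ℝ) * Real.logb 2 (Fintype.card X)
          * (1 - ((i : ℝ) - 1) / (Fintype.card X : ℝ) ^ (k - d))
        + ((k : ℝ) - (d : ℝ)) * Real.logb 2 (Fintype.card X) := by
  have : Nonempty X := Fintype.card_pos_iff.1 (by omega)
  have hL : 0 ≤ Real.logb 2 (Fintype.card X) :=
    Real.logb_nonneg one_lt_two (by exact_mod_cast Fintype.card_pos)
  set P : ℝ := #(freshEvent X k d hi) / Fintype.card (BlockSpace X k d i)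
  have hP : 1 - ((i : ℝ) - 1) / (Fintype.card X : ℝ) ^ (k - d) ≤ P := by
    have h := one_sub_div_le_card_freshEvent_div (X := X) (k := k) (d := d) hi
    rwa [Fintype.card_fun, Fintype.card_fin, Nat.cast_pow] at h
  calc condEnt _ _
      = Real.logb 2 (Fintype.card (Fin (k - d) → X)) +
          P * Real.logb 2 (Fintype.card (Fin d → X)) := condEnt_lastBlock_history hdk hi
    _ = ((k : ℝ) - d) * Real.logb 2 (Fintype.card X) +
          P * (d * Real.logb 2 (Fintype.card X)) := by
        simp only [Fintype.card_fun, Fintype.card_fin, Nat.cast_pow, Real.logb_pow,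
          Nat.cast_sub hdk]
    _ ≥ _ := by linarith [mul_le_mul_of_nonneg_right hP (mul_nonneg (Nat.cast_nonneg d) hL)]
end

section
/- Under the block-generation process of the previous statement, for i ≤ |X|^{k-d} the entropy of the first i blocks satisfies H(Z^{ik}) ≥ (1/2)·i·d·log|X| + i·(k-d)·log|X|. -/
open Finset

/-!
A value `a` of the `i` blocks determines every prefix and, for each distinct prefix, the suffix
of its first occurrence; only the other suffixes are free. Hence `P(Z = a) ≤ |X|^-(e a)` with
`e a = (k - d) i + d m(a)`, `m(a)` the number of distinct prefixes of `a`, and so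
`H(Z) ≥ E[e] log |X|`. The expected number of distinct values among `i` uniform draws from a set
of size `N` is `N (1 - (1 - 1/N)^i)`, and `(1 - y)^i (1 + i y) ≤ (1 - y²)^i ≤ 1` shows this is at
least `i / 2` when `i ≤ N`.
-/

theorem nat_mul_div_two_le_one_sub_one_sub_pow (n : ℕ) {y : ℝ} (hy₀ : 0 ≤ y) (hy₁ : y ≤ 1)
    (hny : n * y ≤ 1) : n * y / 2 ≤ 1 - (1 - y) ^ n := by
  have hq : 0 ≤ (1 - y) ^ n := pow_nonneg (by linarith) n
  have hprod : (1 - y) ^ n * (1 + n * y) ≤ 1 := calc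
    (1 - y) ^ n * (1 + n * y) ≤ (1 - y) ^ n * (1 + y) ^ n :=
      mul_le_mul_of_nonneg_left (one_add_mul_le_pow (by linarith) n) hq
    _ = (1 - y ^ 2) ^ n := by rw [← mul_pow]; ring
    _ ≤ 1 := pow_le_one₀ (by nlinarith) (by nlinarith)
  have hny₀ : 0 ≤ n * y := by positivity
  nlinarith [mul_nonneg hny₀ (sub_nonneg.2 hny)]

theorem nat_div_two_mul_pow_le (N : ℝ) (n : ℕ) (hn : (n : ℝ) ≤ N) :
    n / 2 * N ^ n ≤ N * (N ^ n - (N - 1) ^ n) := by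
  rcases n.eq_zero_or_pos with rfl | hn₀
  · simp
  have hN : 0 < N := lt_of_lt_of_le (by exact_mod_cast hn₀) hn
  have key := nat_mul_div_two_le_one_sub_one_sub_pow n (y := N⁻¹) (by positivity)
    (inv_le_one_of_one_le₀ (le_trans (by exact_mod_cast hn₀) hn))
    (by rw [← div_eq_mul_inv, div_le_one hN]; exact hn)
  have hpow : (1 - N⁻¹) ^ n = (N - 1) ^ n / N ^ n := by rw [← div_pow]; field_simp
  rw [hpow] at key
  field_simp at key
  nlinarith

theorem card_filter_forall_ne {I P : Type*} [Fintype I] [DecidableEq I] [Fintype P]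
    [DecidableEq P] (a : P) :
    #{g : I → P | ∀ j, g j ≠ a} = (Fintype.card P - 1) ^ Fintype.card I := by
  rw [← Fintype.card_subtype, Fintype.card_congr (Equiv.subtypePiEquivPi (p := fun _ x => x ≠ a)),
    Fintype.card_pi]
  simp [Fintype.card_subtype_compl]

theorem sum_card_image_eq {I P : Type*} [Fintype I] [DecidableEq I] [Fintype P]
    [DecidableEq P] :
    (∑ g : I → P, #(univ.image g) : ℝ) = Fintype.card P
      * (Fintype.card P ^ Fintype.card I - (Fintype.card P - 1 : ℝ) ^ Fintype.card I) := by
  have hcount (a : P) : (#{g : I → P | a ∈ univ.image g} : ℝ)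
      = Fintype.card P ^ Fintype.card I - (Fintype.card P - 1 : ℝ) ^ Fintype.card I := by
    have hsplit :=
      card_filter_add_card_filter_not (s := (univ : Finset (I → P))) (a ∈ univ.image ·)
    simp only [mem_image, mem_univ, true_and, not_exists] at hsplit
    rw [card_filter_forall_ne, card_univ, Fintype.card_fun] at hsplit
    have hP : 1 ≤ Fintype.card P := Fintype.card_pos_iff.2 ⟨a⟩
    simp only [mem_image, mem_univ, true_and]
    rw [eq_sub_iff_add_eq, ← Nat.cast_pred hP]
    exact_mod_cast hsplit
  calc (∑ g : I → P, #(univ.image g) : ℝ)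
      = ∑ g : I → P, ∑ a : P, if a ∈ univ.image g then (1 : ℝ) else 0 := by
        simp only [sum_boole, filter_mem_eq_inter, univ_inter]
    _ = ∑ a : P, (#{g : I → P | a ∈ univ.image g} : ℝ) := by
        rw [sum_comm]; simp only [sum_boole]
    _ = _ := by simp only [hcount, sum_const, card_univ, nsmul_eq_mul]

theorem nat_div_two_mul_card_pow_le_sum_card_image {I P : Type*} [Fintype I] [DecidableEq I]
    [Fintype P] [DecidableEq P] (h : Fintype.card I ≤ Fintype.card P) :
    (Fintype.card I : ℝ) / 2 * Fintype.card P ^ Fintype.card I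
      ≤ ∑ g : I → P, (#(univ.image g) : ℝ) := by
  rw [sum_card_image_eq]
  exact nat_div_two_mul_pow_le _ _ (by exact_mod_cast h)

theorem card_mul_div_two_le_sum_card_image_fst {I P B : Type*} [Fintype I] [DecidableEq I]
    [Fintype P] [DecidableEq P] [Fintype B] (h : Fintype.card I ≤ Fintype.card P) :
    (Fintype.card ((I → P) × B) : ℝ) * (Fintype.card I / 2)
      ≤ ∑ ω : (I → P) × B, (#(univ.image ω.1) : ℝ) := by
  simp only [Fintype.sum_prod_type, sum_const, card_univ, nsmul_eq_mul, ← mul_sum,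
    Fintype.card_prod, Fintype.card_fun, Nat.cast_mul, Nat.cast_pow]
  nlinarith [mul_le_mul_of_nonneg_right (nat_div_two_mul_card_pow_le_sum_card_image (I := I) h)
    (Nat.cast_nonneg (α := ℝ) (Fintype.card B))]

theorem sum_mul_neg_logb_le_ent {α : Type*} [Fintype α] {p w : α → ℝ} (hp : ∀ a, 0 ≤ p a)
    (hpw : ∀ a, p a ≤ w a) : -∑ a, p a * Real.logb 2 (w a) ≤ ent p := by
  refine neg_le_neg (sum_le_sum fun a _ => ?_)
  rcases (hp a).eq_or_lt with h | h
  · simp [← h]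
  · exact mul_le_mul_of_nonneg_left (Real.logb_le_logb_of_le (by norm_num) h (hpw a)) h.le

theorem sum_div_card_mul_logb_le_entRV {Ω α : Type*} [Fintype Ω] [Fintype α] [DecidableEq α]
    (f : Ω → α) {b : ℝ} (hb : 0 < b) (e : α → ℕ)
    (hfiber : ∀ a, (#{ω | f ω = a} : ℝ) * b ^ e a ≤ Fintype.card Ω) :
    (∑ ω, (e (f ω) : ℝ)) / Fintype.card Ω * Real.logb 2 b ≤ entRV f := by
  have hdist : ∀ a, dist f a ≤ (b ^ e a)⁻¹ := fun a =>
    div_le_of_le_mul₀ (Nat.cast_nonneg _) (by positivity) <| by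
      rw [le_inv_mul_iff₀ (by positivity), mul_comm]; exact hfiber a
  refine le_of_eq_of_le ?_
    (sum_mul_neg_logb_le_ent (fun a => by unfold _root_.dist; positivity) hdist)
  simp only [Real.logb_inv, Real.logb_pow, _root_.dist,
    ← sum_fiberwise' univ f (fun a => (e a : ℝ)), sum_const, nsmul_eq_mul, sum_div, sum_mul,
    ← sum_neg_distrib]
  refine sum_congr rfl fun a _ => ?_
  ring

section FirstOccurrence

variable {i : ℕ} {P : Type*} [DecidableEq P] (p : Fin i → P)

def firstOccurrence (j : Fin i) : Fin i :=
  (univ.filter fun j' => p j' = p j).min' ⟨j, by simp⟩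

theorem apply_firstOccurrence (j : Fin i) : p (firstOccurrence p j) = p j := by
  have h := min'_mem (univ.filter fun j' => p j' = p j) ⟨j, by simp⟩
  exact (mem_filter.1 h).2

theorem firstOccurrence_congr {j j' : Fin i} (h : p j = p j') :
    firstOccurrence p j = firstOccurrence p j' := by
  unfold firstOccurrence
  congr 1
  simp only [h]

theorem card_image_firstOccurrence :
    #(univ.image (firstOccurrence p)) = #(univ.image p) := by
  have hinj : Set.InjOn p (univ.image (firstOccurrence p)) := by
    simp only [coe_image, coe_univ, Set.image_univ]
    rintro _ ⟨j, rfl⟩ _ ⟨j', rfl⟩ h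
    rw [apply_firstOccurrence p, apply_firstOccurrence p] at h
    exact firstOccurrence_congr p h
  rw [← card_image_of_injOn hinj, image_image]
  congr 1
  exact image_congr fun j _ => apply_firstOccurrence p j

end FirstOccurrence

section Blocks

theorem card_blockSpace (X : Type*) [Fintype X] (k d i : ℕ) :
    Fintype.card (BlockSpace X k d i) = Fintype.card X ^ ((k - d) * i + d * i) := by
  simp [Fintype.card_prod, pow_add, pow_mul]

def blockPrefixes {X : Type*} {k i : ℕ} (d : ℕ) (a : Fin i → Fin k → X) :
    Fin i → Fin (k - d) → X :=
  fun j t => a j (Fin.castLE (Nat.sub_le k d) t)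

variable {X : Type*} [DecidableEq X] {k d i : ℕ}

theorem blockPrefixes_blockFn (ω : BlockSpace X k d i) :
    blockPrefixes d (fun j => blockFn k d i ω j) = ω.1 := by
  funext j t
  simp [blockPrefixes, blockFn]

theorem blockFn_suffix (hdk : d ≤ k) (ω : BlockSpace X k d i) (j : Fin i) (s : Fin d) :
    blockFn k d i ω j ⟨k - d + s, by omega⟩ = ω.2 (firstOccurrence ω.1 j) s := by
  simp [blockFn, firstOccurrence]

theorem card_blockFn_fiber_le [Fintype X] (hdk : d ≤ k) (a : Fin i → Fin k → X) :
    #{ω : BlockSpace X k d i | (fun j => blockFn k d i ω j) = a}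
      ≤ Fintype.card X ^ (d * (i - #(univ.image (blockPrefixes d a)))) := by
  set fiber : Finset (BlockSpace X k d i) := {ω | (fun j => blockFn k d i ω j) = a}
  set S := univ.image (firstOccurrence (blockPrefixes d a))
  have hprefix : ∀ ω ∈ fiber, ω.1 = blockPrefixes d a := fun ω hω => by
    rw [← (mem_filter.1 hω).2, blockPrefixes_blockFn]
  have hsuffix : ∀ ω ∈ fiber, ∀ j₀ s,
      ω.2 (firstOccurrence (blockPrefixes d a) j₀) s = a j₀ ⟨k - d + s, by omega⟩ :=
    fun ω hω j₀ s => by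
      rw [← hprefix ω hω, ← blockFn_suffix hdk, ← (mem_filter.1 hω).2]
  have hinj : Set.InjOn (fun (ω : BlockSpace X k d i) (j : ↥Sᶜ) => ω.2 j) fiber := by
    intro ω hω ω' hω' h
    refine Prod.ext ((hprefix ω hω).trans (hprefix ω' hω').symm) (funext fun j => ?_)
    by_cases hj : j ∈ S
    · obtain ⟨j₀, -, rfl⟩ := mem_image.1 hj
      funext s
      rw [hsuffix ω hω, hsuffix ω' hω']
    · exact congrFun h ⟨j, mem_compl.2 hj⟩
  calc #fiber ≤ Fintype.card (↥Sᶜ → Fin d → X) :=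
        card_le_card_of_injOn _ (fun _ _ => mem_univ _) hinj
    _ = _ := by
      rw [Fintype.card_fun, Fintype.card_fun, Fintype.card_fin, Fintype.card_coe, card_compl,
        Fintype.card_fin, card_image_firstOccurrence, ← pow_mul, mul_comm d]

theorem card_blockFn_fiber_mul_pow_le [Fintype X] (hdk : d ≤ k) (a : Fin i → Fin k → X) :
    #{ω : BlockSpace X k d i | (fun j => blockFn k d i ω j) = a}
        * Fintype.card X ^ ((k - d) * i + d * #(univ.image (blockPrefixes d a)))
      ≤ Fintype.card (BlockSpace X k d i) := by
  have hle : #(univ.image (blockPrefixes d a)) ≤ i := card_image_le.trans (by simp)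
  calc _ ≤ Fintype.card X ^ (d * (i - #(univ.image (blockPrefixes d a))))
        * Fintype.card X ^ ((k - d) * i + d * #(univ.image (blockPrefixes d a))) :=
      Nat.mul_le_mul_right _ (card_blockFn_fiber_le hdk a)
    _ = _ := by
      rw [← pow_add, card_blockSpace, add_left_comm, ← mul_add, Nat.sub_add_cancel hle]

end Blocks

theorem stmt9_general {X : Type*} [Fintype X] [DecidableEq X] (hX : 2 ≤ Fintype.card X)
    (k d i : ℕ) (hdk : d ≤ k)
    (hikd : i ≤ Fintype.card X ^ (k - d)) :
    entRV (fun ω : BlockSpace X k d i => fun j : Fin i => blockFn k d i ω j)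
      ≥ (1 / 2) * (i : ℝ) * (d : ℝ) * Real.logb 2 (Fintype.card X)
        + (i : ℝ) * ((k : ℝ) - (d : ℝ)) * Real.logb 2 (Fintype.card X) := by
  set N := Fintype.card X
  have hN : (0 : ℝ) < N := by exact_mod_cast (by omega : 0 < N)
  have hL : 0 ≤ Real.logb 2 N :=
    Real.logb_nonneg (by norm_num) (by exact_mod_cast (by omega : 1 ≤ N))
  have hΩ : (0 : ℝ) < Fintype.card (BlockSpace X k d i) := by
    rw [card_blockSpace]; push_cast; positivity
  have hentropy := sum_div_card_mul_logb_le_entRV (fun ω j => blockFn k d i ω j) hN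
    (fun a => (k - d) * i + d * #(univ.image (blockPrefixes d a)))
    (fun a => by exact_mod_cast card_blockFn_fiber_mul_pow_le hdk a)
  have hdistinct : (Fintype.card (BlockSpace X k d i) : ℝ) * (i / 2)
      ≤ ∑ ω : BlockSpace X k d i, (#(univ.image ω.1) : ℝ) := by
    simpa only [Fintype.card_fin] using card_mul_div_two_le_sum_card_image_fst (I := Fin i)
      (P := Fin (k - d) → X) (B := Fin i → Fin d → X) (by simpa using hikd)
  simp only [blockPrefixes_blockFn, Nat.cast_add, Nat.cast_mul, sum_add_distrib, sum_const,
    card_univ, nsmul_eq_mul, ← mul_sum, div_mul_eq_mul_div] at hentropy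
  refine le_trans ?_ hentropy
  rw [le_div_iff₀ hΩ]
  push_cast [Nat.cast_sub hdk] at hdistinct ⊢
  nlinarith [mul_nonneg (mul_nonneg (Nat.cast_nonneg (α := ℝ) d) (sub_nonneg.2 hdistinct)) hL]

/-- Under the block-generation process, for i ≤ |X|^{k-d} the entropy of the first i blocks
satisfies H(Z^{ik}) ≥ (1/2)·i·d·log|X| + i·(k-d)·log|X|. -/
theorem stmt9 {X : Type*} [Fintype X] [DecidableEq X] (hX : 2 ≤ Fintype.card X)
    (k d i : ℕ) (hd : 1 ≤ d) (hdk : d ≤ k) (hi : 1 ≤ i)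
    (hikd : i ≤ Fintype.card X ^ (k - d)) :
    entRV (fun ω : BlockSpace X k d i => fun j : Fin i => blockFn k d i ω j)
      ≥ (1 / 2) * (i : ℝ) * (d : ℝ) * Real.logb 2 (Fintype.card X)
        + (i : ℝ) * ((k : ℝ) - (d : ℝ)) * Real.logb 2 (Fintype.card X) :=
  stmt9_general hX k d i hdk hikd
end
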